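/- arXiv:1904.12780 — 4 statements merged into one kernel-verified Lean document; each statement's English description precedes it below -/
import Mathlib

section
/- Let ρ ∈ (0,1) and W, Q be probability measures with D_ρ(W‖Q) < ∞, and let W_ρ^Q be the order-ρ tilted probability measure. Let W_ac denote the component of W absolutely continuous with respect to Q. Then W_ρ^Q-almost surely, ln(dW_ρ^Q/dQ) − D_1(W_ρ^Q‖Q) = ρ(ln(dW_ac/dQ) − E_{W_ρ^Q}[ln(dW_ac/dQ)]). -/
open MeasureTheory Real

/-- Integrand of the order-`ρ` Rényi divergence with respect to a dominating measure `ν`. -/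
noncomputable def renyiIntegrand {Y : Type*} [MeasurableSpace Y] (ρ : ℝ) (W Q ν : Measure Y)
    (y : Y) : ℝ :=
  ((W.rnDeriv ν y).toReal) ^ ρ * ((Q.rnDeriv ν y).toReal) ^ (1 - ρ)

/-- Order-`ρ` Rényi divergence `D_ρ(W‖Q)` computed via a dominating measure `ν`. -/
noncomputable def renyiDiv {Y : Type*} [MeasurableSpace Y] (ρ : ℝ) (W Q ν : Measure Y) : ℝ :=
  (ρ - 1)⁻¹ * Real.log (∫ y, renyiIntegrand ρ W Q ν y ∂ν)

/-- Kullback-Leibler divergence `D_1(μ‖ν) = ∫ log (dμ/dν) dμ` (real-valued version). -/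
noncomputable def klDiv' {Y : Type*} [MeasurableSpace Y] (μ ν : Measure Y) : ℝ :=
  ∫ y, Real.log ((μ.rnDeriv ν y).toReal) ∂μ

/-- Order-`ρ` tilted probability measure `W_ρ^Q`:
`dW_ρ^Q/dν = e^{(1-ρ) D_ρ(W‖Q)} (dW/dν)^ρ (dQ/dν)^{1-ρ}`. -/
noncomputable def tilted {Y : Type*} [MeasurableSpace Y] (ρ : ℝ) (W Q ν : Measure Y) :
    Measure Y :=
  ν.withDensity fun y =>
    ENNReal.ofReal (Real.exp ((1 - ρ) * renyiDiv ρ W Q ν) * renyiIntegrand ρ W Q ν y)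

/-! `W` need not be absolutely continuous with respect to `Q`, but the chain rule
`dW/dν = (dW/dQ)(dQ/dν)` still holds `Q`-a.e. (here `dW/dQ = W.rnDeriv Q` is `dW_ac/dQ`), and
where `dQ/dν = 0` the Rényi integrand vanishes because `1 - ρ > 0`. Hence
`dW_ρ^Q/dQ = e^{(1-ρ)D_ρ(W‖Q)} (dW_ac/dQ)^ρ`, whose logarithm is affine in `ln(dW_ac/dQ)`.
Integrating against `W_ρ^Q` (allowed because `u^ρ |ln u| ≤ 1/ρ + u/(1-ρ)`) computes
`D_1(W_ρ^Q‖Q)`, and subtracting gives the identity. -/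

namespace Real

lemma rpow_mul_abs_log_le {ρ u : ℝ} (hρ0 : 0 < ρ) (hρ1 : ρ < 1) (hu : 0 ≤ u) :
    u ^ ρ * |log u| ≤ 1 / ρ + u / (1 - ρ) := by
  have h1ρ : 0 < 1 - ρ := by linarith
  rcases hu.eq_or_lt with rfl | hu_pos
  · rw [zero_rpow hρ0.ne', zero_mul]
    positivity
  rcases le_or_gt u 1 with hu1 | hu1
  · have hsmall : |log u * u ^ ρ| < 1 / ρ := abs_log_mul_self_rpow_lt u ρ hu_pos hu1 hρ0
    rw [abs_mul, abs_of_pos (rpow_pos_of_pos hu_pos ρ), mul_comm] at hsmall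
    have : 0 ≤ u / (1 - ρ) := by positivity
    linarith
  · calc u ^ ρ * |log u| = u ^ ρ * log u := by rw [abs_of_nonneg (log_nonneg hu1.le)]
      _ ≤ u ^ ρ * (u ^ (1 - ρ) / (1 - ρ)) := by gcongr; exact log_le_rpow_div hu h1ρ
      _ = u / (1 - ρ) := by rw [mul_div_assoc', ← rpow_add hu_pos, add_sub_cancel, rpow_one]
      _ ≤ 1 / ρ + u / (1 - ρ) := le_add_of_nonneg_left (by positivity)

end Real

lemma MeasureTheory.Integrable.rpow_mul_log {Y : Type*} [MeasurableSpace Y] {μ : Measure Y}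
    [IsFiniteMeasure μ] {f : Y → ℝ} (hf : Integrable f μ) (hf_nonneg : 0 ≤ᵐ[μ] f) {ρ : ℝ}
    (hρ0 : 0 < ρ) (hρ1 : ρ < 1) : Integrable (fun y => f y ^ ρ * log (f y)) μ := by
  refine ((integrable_const (1 / ρ)).add (hf.div_const (1 - ρ))).mono' ?_ ?_
  · exact ((hf.aemeasurable.pow_const ρ).mul hf.aemeasurable.log).aestronglyMeasurable
  · filter_upwards [hf_nonneg] with y hy
    rw [norm_eq_abs, abs_mul, abs_of_nonneg (rpow_nonneg hy ρ)]
    exact rpow_mul_abs_log_le hρ0 hρ1 hy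

section Tilted

variable {Y : Type*} [MeasurableSpace Y] {ρ : ℝ} {W Q ν : Measure Y}

noncomputable def tiltedDensity (ρ : ℝ) (W Q ν : Measure Y) (y : Y) : ℝ :=
  exp ((1 - ρ) * renyiDiv ρ W Q ν) * (W.rnDeriv Q y).toReal ^ ρ

lemma renyiIntegrand_nonneg (y : Y) : 0 ≤ renyiIntegrand ρ W Q ν y :=
  mul_nonneg (rpow_nonneg ENNReal.toReal_nonneg _) (rpow_nonneg ENNReal.toReal_nonneg _)

lemma measurable_renyiIntegrand : Measurable (renyiIntegrand ρ W Q ν) :=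
  ((Measure.measurable_rnDeriv W ν).ennreal_toReal.pow_const ρ).mul
    ((Measure.measurable_rnDeriv Q ν).ennreal_toReal.pow_const (1 - ρ))

lemma measurable_tiltedDensity : Measurable (tiltedDensity ρ W Q ν) :=
  measurable_const.mul ((Measure.measurable_rnDeriv W Q).ennreal_toReal.pow_const ρ)

lemma integrable_renyiIntegrand [IsFiniteMeasure W] [IsFiniteMeasure Q]
    (hρ0 : 0 ≤ ρ) (hρ1 : ρ ≤ 1) : Integrable (renyiIntegrand ρ W Q ν) ν := by
  refine (((Measure.integrable_toReal_rnDeriv (μ := W)).const_mul ρ).add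
    ((Measure.integrable_toReal_rnDeriv (μ := Q)).const_mul (1 - ρ))).mono'
    measurable_renyiIntegrand.aestronglyMeasurable (ae_of_all _ fun y => ?_)
  rw [Real.norm_eq_abs, abs_of_nonneg (renyiIntegrand_nonneg y)]
  exact geom_mean_le_arith_mean2_weighted hρ0 (sub_nonneg.mpr hρ1)
    ENNReal.toReal_nonneg ENNReal.toReal_nonneg (by ring)

lemma exp_mul_integral_renyiIntegrand (hρ : ρ ≠ 1) (hpos : 0 < ∫ y, renyiIntegrand ρ W Q ν y ∂ν) :
    exp ((1 - ρ) * renyiDiv ρ W Q ν) * ∫ y, renyiIntegrand ρ W Q ν y ∂ν = 1 := by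
  have hρ' : ρ - 1 ≠ 0 := sub_ne_zero.mpr hρ
  have hexponent : (1 - ρ) * renyiDiv ρ W Q ν = -log (∫ y, renyiIntegrand ρ W Q ν y ∂ν) := by
    rw [renyiDiv]
    field_simp
    ring
  rw [hexponent, exp_neg, exp_log hpos, inv_mul_cancel₀ hpos.ne']

lemma isProbabilityMeasure_tilted [IsFiniteMeasure W] [IsFiniteMeasure Q]
    (hρ0 : 0 ≤ ρ) (hρ1 : ρ < 1) (hpos : 0 < ∫ y, renyiIntegrand ρ W Q ν y ∂ν) :
    IsProbabilityMeasure (tilted ρ W Q ν) := by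
  constructor
  rw [tilted, withDensity_apply _ MeasurableSet.univ, setLIntegral_univ,
    ← ofReal_integral_eq_lintegral_ofReal ((integrable_renyiIntegrand hρ0 hρ1.le).const_mul _)
      (ae_of_all _ fun y => mul_nonneg (exp_pos _).le (renyiIntegrand_nonneg y)),
    integral_const_mul, exp_mul_integral_renyiIntegrand hρ1.ne hpos, ENNReal.ofReal_one]

lemma renyiIntegrand_ae_eq [SigmaFinite W] [SigmaFinite Q] [SigmaFinite ν]
    (hρ : ρ ≠ 1) (hQ : Q ≪ ν) :
    renyiIntegrand ρ W Q ν =ᵐ[ν] fun y => (Q.rnDeriv ν y).toReal * (W.rnDeriv Q y).toReal ^ ρ := by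
  filter_upwards [Measure.ae_rnDeriv_ne_zero_imp_of_ae ν
    (Measure.rnDeriv_mul_rnDeriv' (μ := W) hQ)] with y hchain
  rw [renyiIntegrand]
  rcases (ENNReal.toReal_nonneg (a := Q.rnDeriv ν y)).eq_or_lt with hg | hg
  · rw [← hg, zero_rpow (sub_ne_zero.mpr hρ.symm), mul_zero, zero_mul]
  · rw [← hchain (ENNReal.toReal_pos_iff.mp hg).1.ne', Pi.mul_apply, ENNReal.toReal_mul,
      mul_rpow ENNReal.toReal_nonneg hg.le, mul_assoc, ← rpow_add hg, add_sub_cancel, rpow_one,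
      mul_comm]

lemma tilted_eq_withDensity [SigmaFinite W] [SigmaFinite Q] [SigmaFinite ν]
    (hρ : ρ ≠ 1) (hQ : Q ≪ ν) :
    tilted ρ W Q ν = Q.withDensity fun y => ENNReal.ofReal (tiltedDensity ρ W Q ν y) := by
  conv_rhs => enter [1]; rw [← Measure.withDensity_rnDeriv_eq Q ν hQ]
  rw [tilted, ← withDensity_mul _ (Measure.measurable_rnDeriv Q ν)
    measurable_tiltedDensity.ennreal_ofReal]
  refine withDensity_congr_ae ?_
  filter_upwards [renyiIntegrand_ae_eq (W := W) hρ hQ, Measure.rnDeriv_lt_top Q ν] with y hI hg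
  rw [hI, Pi.mul_apply, tiltedDensity, ← ENNReal.ofReal_toReal hg.ne,
    ← ENNReal.ofReal_mul ENNReal.toReal_nonneg, ENNReal.toReal_ofReal ENNReal.toReal_nonneg]
  ring_nf

lemma log_rnDeriv_tilted_ae [SigmaFinite W] [SigmaFinite Q] [SigmaFinite ν]
    (hρ0 : ρ ≠ 0) (hρ1 : ρ ≠ 1) (hQ : Q ≪ ν) :
    ∀ᵐ y ∂tilted ρ W Q ν, log ((tilted ρ W Q ν).rnDeriv Q y).toReal =
      (1 - ρ) * renyiDiv ρ W Q ν + ρ * log (W.rnDeriv Q y).toReal := by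
  have hdensity : Measurable fun y => ENNReal.ofReal (tiltedDensity ρ W Q ν y) :=
    measurable_tiltedDensity.ennreal_ofReal
  rw [tilted_eq_withDensity hρ1 hQ]
  have hpos : ∀ᵐ y ∂Q.withDensity fun y => ENNReal.ofReal (tiltedDensity ρ W Q ν y),
      0 < tiltedDensity ρ W Q ν y :=
    (ae_withDensity_iff hdensity).mpr <| ae_of_all _ fun _ h => ENNReal.ofReal_pos.mp h.bot_lt
  filter_upwards [hpos, (withDensity_absolutelyContinuous Q _).ae_le
    (Measure.rnDeriv_withDensity Q hdensity)] with y hpos hrn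
  rw [hrn, ENNReal.toReal_ofReal hpos.le]
  rw [tiltedDensity] at hpos ⊢
  have hu : 0 < (W.rnDeriv Q y).toReal := by
    refine ENNReal.toReal_nonneg.lt_of_ne fun hu => ?_
    rw [← hu, zero_rpow hρ0, mul_zero] at hpos
    exact hpos.false
  rw [log_mul (exp_pos _).ne' (rpow_pos_of_pos hu ρ).ne', log_exp, log_rpow hu]

lemma integrable_log_rnDeriv_tilted [IsFiniteMeasure W] [IsFiniteMeasure Q] [SigmaFinite ν]
    (hρ0 : 0 < ρ) (hρ1 : ρ < 1) (hQ : Q ≪ ν) :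
    Integrable (fun y => log (W.rnDeriv Q y).toReal) (tilted ρ W Q ν) := by
  rw [tilted_eq_withDensity hρ1.ne hQ, integrable_withDensity_iff
    measurable_tiltedDensity.ennreal_ofReal (ae_of_all _ fun _ => ENNReal.ofReal_lt_top)]
  have hdensity (y : Y) :
      (ENNReal.ofReal (tiltedDensity ρ W Q ν y)).toReal = tiltedDensity ρ W Q ν y :=
    ENNReal.toReal_ofReal (mul_nonneg (exp_pos _).le (rpow_nonneg ENNReal.toReal_nonneg _))
  simp_rw [hdensity, tiltedDensity]
  have hrnDeriv : Integrable (fun y => (W.rnDeriv Q y).toReal) Q :=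
    Measure.integrable_toReal_rnDeriv
  convert (hrnDeriv.rpow_mul_log (ae_of_all _ fun _ => ENNReal.toReal_nonneg) hρ0 hρ1).const_mul
    (exp ((1 - ρ) * renyiDiv ρ W Q ν)) using 2
  ring

lemma klDiv'_tilted [IsFiniteMeasure W] [IsFiniteMeasure Q] [SigmaFinite ν]
    (hρ0 : 0 < ρ) (hρ1 : ρ < 1) (hQ : Q ≪ ν) (hpos : 0 < ∫ y, renyiIntegrand ρ W Q ν y ∂ν) :
    klDiv' (tilted ρ W Q ν) Q = (1 - ρ) * renyiDiv ρ W Q ν +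
      ρ * ∫ y, log (W.rnDeriv Q y).toReal ∂tilted ρ W Q ν := by
  have := isProbabilityMeasure_tilted (W := W) (Q := Q) hρ0.le hρ1 hpos
  rw [klDiv', integral_congr_ae (log_rnDeriv_tilted_ae hρ0.ne' hρ1.ne hQ),
    integral_add (integrable_const _) ((integrable_log_rnDeriv_tilted hρ0 hρ1 hQ).const_mul ρ),
    integral_const, probReal_univ, one_smul, integral_const_mul]

end Tilted

theorem tilted_log_density_Q_general {Y : Type*} [MeasurableSpace Y] (ρ : ℝ)
    (hρ : ρ ∈ Set.Ioo (0 : ℝ) 1) (W Q ν : Measure Y)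
    [IsProbabilityMeasure W] [IsProbabilityMeasure Q] [SigmaFinite ν]
    (hQ : Q ≪ ν)
    (hfin : 0 < ∫ y, renyiIntegrand ρ W Q ν y ∂ν) :
    ∀ᵐ y ∂(tilted ρ W Q ν),
      Real.log (((tilted ρ W Q ν).rnDeriv Q y).toReal) - klDiv' (tilted ρ W Q ν) Q =
        ρ * (Real.log ((W.rnDeriv Q y).toReal) -
          ∫ z, Real.log ((W.rnDeriv Q z).toReal) ∂(tilted ρ W Q ν)) := by
  obtain ⟨hρ0, hρ1⟩ := hρ
  filter_upwards [log_rnDeriv_tilted_ae hρ0.ne' hρ1.ne hQ] with y hy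
  rw [hy, klDiv'_tilted hρ0 hρ1 hQ hfin]
  ring

/-- For `ρ ∈ (0,1)` and probability measures `W, Q` with finite `D_ρ(W‖Q)`,
`W_ρ^Q`-a.s. `ln(dW_ρ^Q/dQ) − D_1(W_ρ^Q‖Q) = ρ (ln(dW_ac/dQ) − E_{W_ρ^Q}[ln(dW_ac/dQ)])`,
where `dW_ac/dQ` is the Radon-Nikodym derivative of the absolutely continuous component. -/
theorem tilted_log_density_Q {Y : Type*} [MeasurableSpace Y] (ρ : ℝ)
    (hρ : ρ ∈ Set.Ioo (0 : ℝ) 1) (W Q ν : Measure Y)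
    [IsProbabilityMeasure W] [IsProbabilityMeasure Q] [SigmaFinite ν]
    (hW : W ≪ ν) (hQ : Q ≪ ν)
    (hfin : 0 < ∫ y, renyiIntegrand ρ W Q ν y ∂ν) :
    ∀ᵐ y ∂(tilted ρ W Q ν),
      Real.log (((tilted ρ W Q ν).rnDeriv Q y).toReal) - klDiv' (tilted ρ W Q ν) Q =
        ρ * (Real.log ((W.rnDeriv Q y).toReal) -
          ∫ z, Real.log ((W.rnDeriv Q z).toReal) ∂(tilted ρ W Q ν)) :=
  tilted_log_density_Q_general ρ hρ W Q ν hQ hfin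
end

section
/- Let W(x) = N(x,σ²), ρ ∈ (0,1), θ_ρ as in the Gaussian Augustin center formula, and V(x) the order-ρ tilted measure of W(x) toward N(0,θ_ρ). Let Λ_x = ln(dW(x)/dN(0,θ_ρ)) − E_{V(x)}[ln(dW(x)/dN(0,θ_ρ))]. Then E_{V(x)}[|Λ_x|³] ≤ 18(θ_ρ − σ²)³/(ρθ_ρ + (1−ρ)σ²)³ + 18√(2/π) σ³ θ_ρ^{3/2} x³/(ρθ_ρ + (1−ρ)σ²)^{4.5}. -/
/-!
Under `V = N(m, v)` the log-likelihood ratio `log dW/dQ` is a quadratic polynomial in `y`, so its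
centered version is `Λ = a ((y - m)² - v) + r (y - m)` with `a = (θ⁻¹ - σ⁻²) / 2`; for the tilted
mean `m = ρθx / D`, `D = ρθ + (1 - ρ)σ²`, the linear coefficient collapses to `r = x / D`.
The bounds `|p + q|³ ≤ 4 (|p|³ + |q|³)`, `|z² - v| ≤ z² + v` and `2 √v |z| ≤ z² + v` dominate
`|Λ|³` by an even polynomial in `y - m`, whose integral follows from the Gaussian moments
`v, 3v², 15v³` (integration by parts against the density). The result,
`112 |a|³ v³ + 8 |r|³ v^{3/2} = 14 (θ - σ²)³ / D³ + 8 σ³ θ^{3/2} x³ / D^{9/2}`, is then compared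
with the claimed bound using `θ ≥ σ²` and `√(2/π) ≥ 4/9`.
-/

open MeasureTheory ProbabilityTheory Real

open scoped NNReal

lemma abs_add_pow_three_le (p q : ℝ) : |p + q| ^ 3 ≤ 4 * (|p| ^ 3 + |q| ^ 3) :=
  (pow_le_pow_left₀ (abs_nonneg _) (abs_add_le p q) 3).trans
    ((add_pow_le (abs_nonneg p) (abs_nonneg q) 3).trans_eq (by norm_num))

lemma abs_quadratic_pow_three_le {v : ℝ} (hv : 0 < v) (a r z : ℝ) :
    |a * (z ^ 2 - v) + r * z| ^ 3 ≤
      4 * |a| ^ 3 * (z ^ 2 + v) ^ 3 + 2 * |r| ^ 3 / √v * (z ^ 4 + v * z ^ 2) := by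
  have hquad : |z ^ 2 - v| ≤ z ^ 2 + v :=
    (abs_sub _ _).trans_eq (by rw [abs_of_pos hv, abs_of_nonneg (sq_nonneg z)])
  have hamgm : |z| ≤ (z ^ 2 + v) / (2 * √v) := by
    rw [le_div_iff₀ (by positivity)]
    nlinarith [sq_nonneg (|z| - √v), sq_abs z, sq_sqrt hv.le]
  have hcube : |z| ^ 3 ≤ (z ^ 4 + v * z ^ 2) / (2 * √v) := by
    calc |z| ^ 3 = z ^ 2 * |z| := by rw [pow_succ, sq_abs]
      _ ≤ z ^ 2 * ((z ^ 2 + v) / (2 * √v)) := by gcongr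
      _ = (z ^ 4 + v * z ^ 2) / (2 * √v) := by ring
  calc |a * (z ^ 2 - v) + r * z| ^ 3
      ≤ 4 * (|a| ^ 3 * |z ^ 2 - v| ^ 3 + |r| ^ 3 * |z| ^ 3) := by
        have h := abs_add_pow_three_le (a * (z ^ 2 - v)) (r * z)
        rwa [abs_mul, abs_mul, mul_pow, mul_pow] at h
    _ ≤ 4 * (|a| ^ 3 * (z ^ 2 + v) ^ 3 + |r| ^ 3 * ((z ^ 4 + v * z ^ 2) / (2 * √v))) := by
        gcongr
    _ = _ := by field_simp; ring

namespace ProbabilityTheory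

variable (μ : ℝ) (v : ℝ≥0)

lemma hasDerivAt_gaussianPDFReal (x : ℝ) :
    HasDerivAt (gaussianPDFReal μ v) (-((x - μ) / v) * gaussianPDFReal μ v x) x := by
  have h := ((((hasDerivAt_id x).sub_const μ).fun_pow 2).neg.div_const (2 * (v : ℝ))).exp.const_mul
    (√(2 * π * v))⁻¹
  refine h.congr_deriv ?_
  simp only [gaussianPDFReal, id, Pi.neg_apply]
  ring

@[fun_prop]
lemma integrable_fun_id_gaussianReal : Integrable (fun y => y) (gaussianReal μ v) :=
  (memLp_id_gaussianReal 1).integrable le_rfl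

@[fun_prop]
lemma integrable_centered_pow_gaussianReal (n : ℕ) :
    Integrable (fun y => (y - μ) ^ n) (gaussianReal μ v) := by
  have := ((memLp_id_gaussianReal (μ := μ) (v := v) n).sub (memLp_const μ)).integrable_norm_pow'
  exact (integrable_norm_iff (by fun_prop)).mp (by simpa [norm_pow] using this)

variable {μ v} in
lemma integrable_gaussianPDFReal_mul (hv : v ≠ 0) {f : ℝ → ℝ}
    (hf : Integrable f (gaussianReal μ v)) : Integrable fun y => gaussianPDFReal μ v y * f y := by
  rw [gaussianReal_of_var_ne_zero μ hv, integrable_withDensity_iff_integrable_smul'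
    (measurable_gaussianPDF μ v) (ae_of_all _ fun _ => gaussianPDF_lt_top)] at hf
  simpa [toReal_gaussianPDF] using hf

lemma integral_centered_pow_add_two_gaussianReal (n : ℕ) :
    ∫ y, (y - μ) ^ (n + 2) ∂gaussianReal μ v =
      (n + 1) * v * ∫ y, (y - μ) ^ n ∂gaussianReal μ v := by
  rcases eq_or_ne v 0 with rfl | hv
  · simp [gaussianReal_zero_var]
  simp only [integral_gaussianReal_eq_integral_smul hv, smul_eq_mul]
  have hint k : Integrable fun y => gaussianPDFReal μ v y * (y - μ) ^ k :=
    integrable_gaussianPDFReal_mul hv (integrable_centered_pow_gaussianReal μ v k)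
  have hv' : (v : ℝ) ≠ 0 := by exact_mod_cast hv
  have hderiv y : HasDerivAt (fun y => (y - μ) ^ (n + 1) * gaussianPDFReal μ v y)
      ((n + 1) * (gaussianPDFReal μ v y * (y - μ) ^ n) -
        (v : ℝ)⁻¹ * (gaussianPDFReal μ v y * (y - μ) ^ (n + 2))) y := by
    refine ((((hasDerivAt_id y).sub_const μ).fun_pow (n + 1)).fun_mul
      (hasDerivAt_gaussianPDFReal μ v y)).congr_deriv ?_
    simp only [id, add_tsub_cancel_right]
    push_cast
    field_simp
    ring
  have h := integral_eq_zero_of_hasDerivAt_of_integrable hderiv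
    (((hint n).const_mul _).sub ((hint (n + 2)).const_mul _))
    (by simpa only [mul_comm] using hint (n + 1))
  rw [integral_sub ((hint n).const_mul _) ((hint (n + 2)).const_mul _), integral_const_mul,
    integral_const_mul, sub_eq_zero] at h
  field_simp at h
  linear_combination -h

lemma integral_centered_gaussianReal : ∫ y, (y - μ) ∂gaussianReal μ v = 0 := by
  rw [integral_sub (integrable_fun_id_gaussianReal μ v) (integrable_const μ),
    integral_id_gaussianReal]
  simp

lemma integral_centered_pow_two_gaussianReal : ∫ y, (y - μ) ^ 2 ∂gaussianReal μ v = v := by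
  simpa using integral_centered_pow_add_two_gaussianReal μ v 0

lemma integral_centered_pow_four_gaussianReal :
    ∫ y, (y - μ) ^ 4 ∂gaussianReal μ v = 3 * v ^ 2 := by
  have h := integral_centered_pow_add_two_gaussianReal μ v 2
  rw [integral_centered_pow_two_gaussianReal] at h
  norm_num at h
  linear_combination h

lemma integral_centered_pow_six_gaussianReal :
    ∫ y, (y - μ) ^ 6 ∂gaussianReal μ v = 15 * v ^ 3 := by
  have h := integral_centered_pow_add_two_gaussianReal μ v 4
  rw [integral_centered_pow_four_gaussianReal] at h
  norm_num at h
  linear_combination h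

lemma integral_centered_poly_gaussianReal (c₆ c₄ c₂ c₁ c₀ : ℝ) :
    ∫ y, (c₆ * (y - μ) ^ 6 + c₄ * (y - μ) ^ 4 + c₂ * (y - μ) ^ 2 + c₁ * (y - μ) + c₀)
        ∂gaussianReal μ v = 15 * c₆ * v ^ 3 + 3 * c₄ * v ^ 2 + c₂ * v + c₀ := by
  rw [integral_add (by fun_prop) (integrable_const _), integral_add (by fun_prop) (by fun_prop),
    integral_add (by fun_prop) (by fun_prop), integral_add (by fun_prop) (by fun_prop)]
  simp only [integral_const_mul, integral_centered_pow_six_gaussianReal,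
    integral_centered_pow_four_gaussianReal, integral_centered_pow_two_gaussianReal,
    integral_centered_gaussianReal, integral_const, probReal_univ, smul_eq_mul]
  ring

variable {μ v} in
lemma ae_sub_integral_eq_of_ae_eq_quadratic {f : ℝ → ℝ} (a b c : ℝ)
    (hf : f =ᵐ[gaussianReal μ v] fun y => a * y ^ 2 + b * y + c) :
    ∀ᵐ y ∂gaussianReal μ v, f y - ∫ z, f z ∂gaussianReal μ v =
      a * ((y - μ) ^ 2 - v) + (2 * a * μ + b) * (y - μ) := by
  have hexpand (y : ℝ) : a * y ^ 2 + b * y + c = 0 * (y - μ) ^ 6 + 0 * (y - μ) ^ 4 +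
      a * (y - μ) ^ 2 + (2 * a * μ + b) * (y - μ) + (a * μ ^ 2 + b * μ + c) := by ring
  rw [integral_congr_ae hf, funext hexpand, integral_centered_poly_gaussianReal]
  filter_upwards [hf] with y hy
  rw [hy, hexpand]
  ring

lemma integral_abs_centered_quadratic_pow_three_le (a r : ℝ) (hv : v ≠ 0) :
    ∫ y, |a * ((y - μ) ^ 2 - v) + r * (y - μ)| ^ 3 ∂gaussianReal μ v ≤
      112 * |a| ^ 3 * v ^ 3 + 8 * |r| ^ 3 * v * √v := by
  have hv' : (0 : ℝ) < v := by positivity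
  have hbound (y : ℝ) : |a * ((y - μ) ^ 2 - v) + r * (y - μ)| ^ 3 ≤
      4 * |a| ^ 3 * (y - μ) ^ 6 + (12 * |a| ^ 3 * v + 2 * |r| ^ 3 / √v) * (y - μ) ^ 4 +
        (12 * |a| ^ 3 * v ^ 2 + 2 * |r| ^ 3 / √v * v) * (y - μ) ^ 2 + 0 * (y - μ) +
          4 * |a| ^ 3 * v ^ 3 :=
    (abs_quadratic_pow_three_le hv' a r (y - μ)).trans_eq (by ring)
  calc _ ≤ _ := integral_mono_of_nonneg (ae_of_all _ fun _ => by positivity) (by fun_prop)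
        (ae_of_all _ hbound)
    _ = 112 * |a| ^ 3 * v ^ 3 + 8 * |r| ^ 3 * v * √v := by
      rw [integral_centered_poly_gaussianReal]
      field_simp
      linear_combination (-8 * |r| ^ 3) * sq_sqrt hv'.le

lemma rnDeriv_gaussianReal_gaussianReal {μ₁ μ₂ : ℝ} {v₁ v₂ : ℝ≥0} (hv₁ : v₁ ≠ 0) (hv₂ : v₂ ≠ 0) :
    (gaussianReal μ₁ v₁).rnDeriv (gaussianReal μ₂ v₂) =ᵐ[volume]
      fun y => gaussianPDF μ₁ v₁ y / gaussianPDF μ₂ v₂ y := by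
  have hmeas : Measurable fun y => gaussianPDF μ₁ v₁ y / gaussianPDF μ₂ v₂ y :=
    (measurable_gaussianPDF _ _).div (measurable_gaussianPDF _ _)
  have hdensity : gaussianReal μ₁ v₁ = (gaussianReal μ₂ v₂).withDensity
      fun y => gaussianPDF μ₁ v₁ y / gaussianPDF μ₂ v₂ y := by
    rw [gaussianReal_of_var_ne_zero _ hv₁, gaussianReal_of_var_ne_zero _ hv₂,
      ← withDensity_mul _ (measurable_gaussianPDF _ _) hmeas]
    congr 1
    funext y
    exact (ENNReal.mul_div_cancel (gaussianPDF_pos _ hv₂ _).ne' gaussianPDF_ne_top).symm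
  rw [hdensity]
  exact (gaussianReal_absolutelyContinuous' μ₂ hv₂).ae_eq (Measure.rnDeriv_withDensity _ hmeas)

lemma log_gaussianPDFReal (hv : v ≠ 0) (y : ℝ) :
    Real.log (gaussianPDFReal μ v y) = -Real.log (2 * π * v) / 2 - (y - μ) ^ 2 / (2 * v) := by
  have hv' : (0 : ℝ) < v := by positivity
  rw [gaussianPDFReal, Real.log_mul (by positivity) (exp_pos _).ne', Real.log_inv,
    Real.log_sqrt (by positivity), Real.log_exp]
  ring

lemma log_rnDeriv_gaussianReal {μ₁ μ₂ : ℝ} {v₁ v₂ : ℝ≥0} (hv₁ : v₁ ≠ 0) (hv₂ : v₂ ≠ 0) :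
    ∀ᵐ y, Real.log ((gaussianReal μ₁ v₁).rnDeriv (gaussianReal μ₂ v₂) y).toReal =
      ((v₂ : ℝ)⁻¹ - (v₁ : ℝ)⁻¹) / 2 * y ^ 2 + (μ₁ / v₁ - μ₂ / v₂) * y +
        (μ₂ ^ 2 / v₂ - μ₁ ^ 2 / v₁ + Real.log (v₂ / v₁)) / 2 := by
  have hv₁' : (v₁ : ℝ) ≠ 0 := by exact_mod_cast hv₁
  have hv₂' : (v₂ : ℝ) ≠ 0 := by exact_mod_cast hv₂
  filter_upwards [rnDeriv_gaussianReal_gaussianReal (μ₁ := μ₁) (μ₂ := μ₂) hv₁ hv₂] with y hy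
  rw [hy, ENNReal.toReal_div, toReal_gaussianPDF, toReal_gaussianPDF,
    Real.log_div (gaussianPDFReal_pos _ _ _ hv₁).ne' (gaussianPDFReal_pos _ _ _ hv₂).ne',
    log_gaussianPDFReal _ _ hv₁, log_gaussianPDFReal _ _ hv₂, Real.log_div hv₂' hv₁',
    Real.log_mul (by positivity) hv₁', Real.log_mul (by positivity) hv₂']
  field_simp
  ring

lemma ae_sub_integral_log_rnDeriv_gaussianReal {μ₁ μ₂ m : ℝ} {v₁ v₂ v : ℝ≥0} (hv₁ : v₁ ≠ 0)
    (hv₂ : v₂ ≠ 0) (hv : v ≠ 0) :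
    ∀ᵐ y ∂gaussianReal m v,
      Real.log ((gaussianReal μ₁ v₁).rnDeriv (gaussianReal μ₂ v₂) y).toReal -
          ∫ z, Real.log ((gaussianReal μ₁ v₁).rnDeriv (gaussianReal μ₂ v₂) z).toReal
            ∂gaussianReal m v =
        ((v₂ : ℝ)⁻¹ - (v₁ : ℝ)⁻¹) / 2 * ((y - m) ^ 2 - v) +
          (((v₂ : ℝ)⁻¹ - (v₁ : ℝ)⁻¹) * m + μ₁ / v₁ - μ₂ / v₂) * (y - m) := by
  filter_upwards [ae_sub_integral_eq_of_ae_eq_quadratic _ _ _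
    ((gaussianReal_absolutelyContinuous m hv).ae_le (log_rnDeriv_gaussianReal hv₁ hv₂))]
    with y hy
  rw [hy]
  ring

end ProbabilityTheory

lemma add_sqrt_sq_add_nonneg (u : ℝ) {c : ℝ} (hc : 0 ≤ c) : 0 ≤ u + √(u ^ 2 + c) := by
  have := abs_le_sqrt (le_add_of_nonneg_right hc : u ^ 2 ≤ u ^ 2 + c)
  linarith [neg_abs_le u]

lemma tilted_parameters_bound_le {σ θ x D : ℝ} (hσ : 0 < σ) (hx : 0 ≤ x) (hθσ : σ ^ 2 ≤ θ)
    (hD : 0 < D) :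
    112 * |(θ⁻¹ - (σ ^ 2)⁻¹) / 2| ^ 3 * (σ ^ 2 * θ / D) ^ 3 +
        8 * |x / D| ^ 3 * (σ ^ 2 * θ / D) * √(σ ^ 2 * θ / D) ≤
      18 * (θ - σ ^ 2) ^ 3 / D ^ 3 +
        18 * √(2 / π) * σ ^ 3 * θ ^ ((3 : ℝ) / 2) * x ^ 3 / D ^ ((4.5 : ℝ)) := by
  have hθ : 0 < θ := (pow_pos hσ 2).trans_le hθσ
  have hθ32 : θ ^ ((3 : ℝ) / 2) = θ * √θ := by
    rw [sqrt_eq_rpow, ← rpow_one_add' hθ.le (by norm_num)]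
    norm_num
  have hD92 : D ^ ((4.5 : ℝ)) = D ^ 4 * √D := by
    rw [sqrt_eq_rpow, ← rpow_natCast, ← rpow_add hD]
    norm_num
  have hquad : 112 * |(θ⁻¹ - (σ ^ 2)⁻¹) / 2| ^ 3 * (σ ^ 2 * θ / D) ^ 3 =
      14 * (θ - σ ^ 2) ^ 3 / D ^ 3 := by
    rw [show (θ⁻¹ - (σ ^ 2)⁻¹) / 2 = -((θ - σ ^ 2) / (2 * θ * σ ^ 2)) by field_simp; ring,
      abs_neg, abs_of_nonneg (by have := sub_nonneg.mpr hθσ; positivity)]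
    field_simp
    ring
  have hlin : 8 * |x / D| ^ 3 * (σ ^ 2 * θ / D) * √(σ ^ 2 * θ / D) =
      8 * σ ^ 3 * θ ^ ((3 : ℝ) / 2) * x ^ 3 / D ^ ((4.5 : ℝ)) := by
    rw [abs_of_nonneg (by positivity), sqrt_div' _ hD.le, sqrt_mul (by positivity), sqrt_sq hσ.le,
      hθ32, hD92]
    field_simp
  have hsqrt : 8 ≤ 18 * √(2 / π) := by
    have : (4 / 9 : ℝ) ^ 2 ≤ 2 / π := by
      rw [le_div_iff₀ pi_pos]
      nlinarith [pi_le_four]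
    nlinarith [le_sqrt_of_sq_le this]
  rw [hquad, hlin]
  gcongr ?_ + ?_
  · have := sub_nonneg.mpr hθσ
    gcongr
    norm_num
  · gcongr

/-- Third absolute moment bound for the centered log-likelihood ratio of the Gaussian channel
under the order-`ρ` tilted measure:
`E_{V(x)}[|Λ_x|³] ≤ 18(θ_ρ−σ²)³/(ρθ_ρ+(1−ρ)σ²)³ + 18√(2/π) σ³ θ_ρ^{3/2} x³/(ρθ_ρ+(1−ρ)σ²)^{4.5}`. -/
theorem gaussian_tilted_third_moment (σ P ρ x θ : ℝ) (hσ : 0 < σ) (hP : 0 < P) (hx : 0 < x)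
    (hρ : ρ ∈ Set.Ioo (0 : ℝ) 1)
    (hθ : θ = σ ^ 2 + P / 2 - σ ^ 2 / (2 * ρ) +
      Real.sqrt ((P / 2 - σ ^ 2 / (2 * ρ)) ^ 2 + P * σ ^ 2)) :
    let W := gaussianReal x (σ ^ 2).toNNReal
    let Q := gaussianReal 0 θ.toNNReal
    let V := gaussianReal (ρ * θ * x / (ρ * θ + (1 - ρ) * σ ^ 2))
      (σ ^ 2 * θ / (ρ * θ + (1 - ρ) * σ ^ 2)).toNNReal
    let Λ := fun y : ℝ => Real.log ((W.rnDeriv Q y).toReal) -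
      ∫ z, Real.log ((W.rnDeriv Q z).toReal) ∂V
    ∫ y, |Λ y| ^ 3 ∂V ≤
      18 * (θ - σ ^ 2) ^ 3 / (ρ * θ + (1 - ρ) * σ ^ 2) ^ 3 +
        18 * Real.sqrt (2 / π) * σ ^ 3 * θ ^ ((3 : ℝ) / 2) * x ^ 3 /
          (ρ * θ + (1 - ρ) * σ ^ 2) ^ ((4.5 : ℝ)) := by
  intro W Q V Λ
  have hθσ : σ ^ 2 ≤ θ := by
    linarith [add_sqrt_sq_add_nonneg (P / 2 - σ ^ 2 / (2 * ρ)) (by positivity : 0 ≤ P * σ ^ 2)]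
  have hσ2 : 0 < σ ^ 2 := by positivity
  have hθ0 : 0 < θ := hσ2.trans_le hθσ
  set D := ρ * θ + (1 - ρ) * σ ^ 2 with hD_def
  have hD : 0 < D := by nlinarith [hρ.1, hρ.2]
  have hv : 0 < σ ^ 2 * θ / D := by positivity
  have hvV : (σ ^ 2 * θ / D).toNNReal ≠ 0 := (Real.toNNReal_pos.mpr hv).ne'
  have hΛ : ∀ᵐ y ∂V, Λ y = (θ⁻¹ - (σ ^ 2)⁻¹) / 2 * ((y - ρ * θ * x / D) ^ 2 - σ ^ 2 * θ / D) +
      x / D * (y - ρ * θ * x / D) := by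
    filter_upwards [ae_sub_integral_log_rnDeriv_gaussianReal (μ₁ := x) (μ₂ := 0)
      (Real.toNNReal_pos.mpr hσ2).ne' (Real.toNNReal_pos.mpr hθ0).ne' hvV] with y hy
    rw [← hD_def, Real.coe_toNNReal _ hσ2.le, Real.coe_toNNReal _ hθ0.le,
      Real.coe_toNNReal _ hv.le] at hy
    refine hy.trans ?_
    field_simp
    ring
  calc ∫ y, |Λ y| ^ 3 ∂V
      = ∫ y, |(θ⁻¹ - (σ ^ 2)⁻¹) / 2 * ((y - ρ * θ * x / D) ^ 2 - σ ^ 2 * θ / D) +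
          x / D * (y - ρ * θ * x / D)| ^ 3 ∂V :=
        integral_congr_ae (hΛ.mono fun y hy => by dsimp only; rw [hy])
    _ ≤ 112 * |(θ⁻¹ - (σ ^ 2)⁻¹) / 2| ^ 3 * (σ ^ 2 * θ / D) ^ 3 +
          8 * |x / D| ^ 3 * (σ ^ 2 * θ / D) * √(σ ^ 2 * θ / D) := by
      simpa only [Real.coe_toNNReal _ hv.le] using
        integral_abs_centered_quadratic_pow_three_le _ _ _ (x / D) hvV
    _ ≤ _ := tilted_parameters_bound_le hσ hx.le hθσ hD
end

section
/- Let ρ ∈ (0,1). Then (1/(1−e^{ρ−1})) · (1−e^{−ρ})^{(ρ−1)/ρ} ≤ (1/(1−ρ)) · ρ^{(ρ−1)/ρ} · e^{1/(2ρ)}. -/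
/-! Everything follows from `t + 1 ≤ exp t`: it gives `1 - exp (-t) ≥ t exp (-t)`, which bounds the
first factor (at `t = 1 - ρ`) and, since the exponent `(ρ - 1)/ρ` is negative, the second factor
(at `t = ρ`) by `ρ^((ρ-1)/ρ) exp (1 - ρ)`. The two resulting factors `exp (1 - ρ)` combine to
`exp (2(1 - ρ)) ≤ exp (1/(2ρ))`, which is `4ρ(1 - ρ) ≤ 1`. -/

open Real

lemma mul_exp_neg_le_one_sub_exp_neg (t : ℝ) : t * exp (-t) ≤ 1 - exp (-t) := by
  have h : (t + 1) * exp (-t) ≤ exp t * exp (-t) :=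
    mul_le_mul_of_nonneg_right (add_one_le_exp t) (exp_pos _).le
  rw [← exp_add, add_neg_cancel, exp_zero] at h
  linarith

lemma one_div_one_sub_exp_neg_le {t : ℝ} (ht : 0 < t) : 1 / (1 - exp (-t)) ≤ exp t / t := by
  have hpos : 0 < t * exp (-t) := mul_pos ht (exp_pos _)
  calc 1 / (1 - exp (-t)) ≤ 1 / (t * exp (-t)) :=
        one_div_le_one_div_of_le hpos (mul_exp_neg_le_one_sub_exp_neg t)
    _ = exp t / t := by rw [exp_neg]; field_simp

lemma one_sub_exp_neg_rpow_le {t a : ℝ} (ht : 0 < t) (ha : a ≤ 0) :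
    (1 - exp (-t)) ^ a ≤ t ^ a * exp (-(t * a)) := by
  calc (1 - exp (-t)) ^ a ≤ (t * exp (-t)) ^ a :=
        rpow_le_rpow_of_nonpos (mul_pos ht (exp_pos _)) (mul_exp_neg_le_one_sub_exp_neg t) ha
    _ = t ^ a * exp (-(t * a)) := by
        rw [mul_rpow ht.le (exp_pos _).le, ← exp_mul, neg_mul]

lemma two_mul_one_sub_le_one_div_two_mul {ρ : ℝ} (hρ : 0 < ρ) : 2 * (1 - ρ) ≤ 1 / (2 * ρ) := by
  rw [le_div_iff₀ (by positivity)]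
  nlinarith [sq_nonneg (2 * ρ - 1)]

/-- For `ρ ∈ (0,1)`,
`(1/(1−e^{ρ−1})) (1−e^{−ρ})^{(ρ−1)/ρ} ≤ (1/(1−ρ)) ρ^{(ρ−1)/ρ} e^{1/(2ρ)}`. -/
theorem analytic_ineq_rho (ρ : ℝ) (hρ : ρ ∈ Set.Ioo (0 : ℝ) 1) :
    (1 / (1 - Real.exp (ρ - 1))) * (1 - Real.exp (-ρ)) ^ ((ρ - 1) / ρ) ≤
      (1 / (1 - ρ)) * ρ ^ ((ρ - 1) / ρ) * Real.exp (1 / (2 * ρ)) := by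
  obtain ⟨h0, h1⟩ := hρ
  have h1ρ : 0 < 1 - ρ := sub_pos.mpr h1
  have hfirst : 1 / (1 - exp (ρ - 1)) ≤ exp (1 - ρ) / (1 - ρ) := by
    simpa only [neg_sub] using one_div_one_sub_exp_neg_le h1ρ
  have hsecond : (1 - exp (-ρ)) ^ ((ρ - 1) / ρ) ≤ ρ ^ ((ρ - 1) / ρ) * exp (1 - ρ) := by
    have h := one_sub_exp_neg_rpow_le h0
      (div_nonpos_of_nonpos_of_nonneg (sub_nonpos.mpr h1.le) h0.le)
    rwa [mul_div_cancel₀ _ h0.ne', neg_sub] at h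
  have hbase : 0 ≤ 1 - exp (-ρ) := sub_nonneg.mpr (exp_le_one_iff.mpr (by linarith))
  have hexp : exp (1 - ρ) * exp (1 - ρ) ≤ exp (1 / (2 * ρ)) := by
    rw [← exp_add, ← two_mul]
    exact exp_le_exp.mpr (two_mul_one_sub_le_one_div_two_mul h0)
  calc 1 / (1 - exp (ρ - 1)) * (1 - exp (-ρ)) ^ ((ρ - 1) / ρ)
      ≤ exp (1 - ρ) / (1 - ρ) * (ρ ^ ((ρ - 1) / ρ) * exp (1 - ρ)) :=
        mul_le_mul hfirst hsecond (rpow_nonneg hbase _) (by positivity)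
    _ = 1 / (1 - ρ) * ρ ^ ((ρ - 1) / ρ) * (exp (1 - ρ) * exp (1 - ρ)) := by ring
    _ ≤ 1 / (1 - ρ) * ρ ^ ((ρ - 1) / ρ) * exp (1 / (2 * ρ)) :=
        mul_le_mul_of_nonneg_left hexp (by positivity)
end

section
/- Let W be a channel (a map from an input set X to probability measures on an output space), ρ ∈ (0,1), P a finitely supported input distribution, and q_{ρ,P} the order-ρ Augustin mean achieving I_ρ(P;W) = inf_Q Σ_x P(x) D_ρ(W(x)‖Q). Then I_ρ(P;W) = (ρ/(1−ρ)) Σ_x P(x) D_1(W_ρ^{q_{ρ,P}}(x)‖W(x)) + Σ_x P(x) D_1(W_ρ^{q_{ρ,P}}(x)‖q_{ρ,P}), where W_ρ^{q}(x) is the order-ρ tilted measure between W(x) and q. -/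
open MeasureTheory Real

/-- Order-`ρ` Rényi divergence between two measures, using `W + Q` as the canonical
dominating measure. -/
noncomputable def renyiDivM {Y : Type*} [MeasurableSpace Y] (ρ : ℝ) (W Q : Measure Y) : ℝ :=
  renyiDiv ρ W Q (W + Q)

/-- Order-`ρ` tilted measure between two measures, using `W + Q` as the canonical dominating
measure. -/
noncomputable def tiltedM {Y : Type*} [MeasurableSpace Y] (ρ : ℝ) (W Q : Measure Y) :
    Measure Y :=
  tilted ρ W Q (W + Q)

/-- Elementary bound: for `t ∈ [0,1]` and `a > 0`, `t^a |log t| ≤ 1/a`. -/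
private lemma aug_bound {t a : ℝ} (ht0 : 0 ≤ t) (ht1 : t ≤ 1) (ha : 0 < a) :
    t ^ a * |Real.log t| ≤ 1 / a := by
  rcases eq_or_lt_of_le ht0 with h | h
  · rw [← h, Real.zero_rpow ha.ne', zero_mul]
    positivity
  · have hlog : Real.log t ≤ 0 := Real.log_nonpos ht0 ht1
    rw [abs_of_nonpos hlog]
    have h1 : Real.log (t ^ (-a)) ≤ t ^ (-a) - 1 :=
      Real.log_le_sub_one_of_pos (Real.rpow_pos_of_pos h _)
    rw [Real.log_rpow h] at h1
    have h2 : -Real.log t ≤ a⁻¹ * t ^ (-a) := by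
      have h3 := mul_le_mul_of_nonneg_left h1 (inv_pos.mpr ha).le
      have h4 : a⁻¹ * a = 1 := inv_mul_cancel₀ ha.ne'
      nlinarith [Real.rpow_pos_of_pos h (-a)]
    calc t ^ a * -Real.log t ≤ t ^ a * (a⁻¹ * t ^ (-a)) :=
          mul_le_mul_of_nonneg_left h2 (Real.rpow_nonneg ht0 _)
      _ = a⁻¹ * (t ^ a * t ^ (-a)) := by ring
      _ = 1 / a := by
          rw [← Real.rpow_add h, add_neg_cancel, Real.rpow_zero, mul_one, one_div]

/-- The key pointwise (per input) identity:
`D_ρ(W‖q) = (ρ/(1-ρ)) D_1(W_ρ^q‖W) + D_1(W_ρ^q‖q)`. -/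
private lemma aug_key {Y : Type*} [MeasurableSpace Y] (W q : Measure Y)
    [IsProbabilityMeasure W] [IsProbabilityMeasure q] {ρ : ℝ} (hρ0 : 0 < ρ) (hρ1 : ρ < 1)
    (hZpos : 0 < ∫ y, renyiIntegrand ρ W q (W + q) y ∂(W + q)) :
    renyiDivM ρ W q =
      (ρ / (1 - ρ)) * klDiv' (tiltedM ρ W q) W + klDiv' (tiltedM ρ W q) q := by
  set ν := W + q with hν
  set Z := ∫ y, renyiIntegrand ρ W q ν y ∂ν with hZdef
  have hZ : 0 < Z := hZpos
  have h1ρ : (0:ℝ) < 1 - ρ := by linarith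
  -- measurability facts
  have mw : Measurable fun y => (W.rnDeriv ν y).toReal :=
    (Measure.measurable_rnDeriv _ _).ennreal_toReal
  have mg : Measurable fun y => (q.rnDeriv ν y).toReal :=
    (Measure.measurable_rnDeriv _ _).ennreal_toReal
  have mrpow : ∀ c : ℝ, 0 ≤ c → Measurable fun x : ℝ => x ^ c := fun c hc =>
    (continuous_id.rpow_const fun _ => Or.inr hc).measurable
  have mR : Measurable (renyiIntegrand ρ W q ν) :=
    ((mrpow ρ hρ0.le).comp mw).mul ((mrpow (1 - ρ) h1ρ.le).comp mg)
  set f : Y → ℝ := fun y => Z⁻¹ * renyiIntegrand ρ W q ν y with hf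
  have mf : Measurable f := mR.const_mul _
  have hf_nn : ∀ y, 0 ≤ f y := fun y =>
    mul_nonneg (inv_nonneg.mpr hZ.le)
      (mul_nonneg (Real.rpow_nonneg ENNReal.toReal_nonneg _)
        (Real.rpow_nonneg ENNReal.toReal_nonneg _))
  set F : Y → ENNReal := fun y => ENNReal.ofReal (f y) with hF
  have mF : Measurable F := mf.ennreal_ofReal
  -- the tilted measure is `ν.withDensity F`
  have hexp : Real.exp ((1 - ρ) * renyiDiv ρ W q ν) = Z⁻¹ := by
    have hne : ρ - 1 ≠ 0 := by linarith
    have h' : (1 - ρ) * ((ρ - 1)⁻¹ * Real.log Z) = -Real.log Z := by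
      field_simp
      ring
    rw [renyiDiv, ← hZdef, h', Real.exp_neg, Real.exp_log hZ]
  have htilt : tiltedM ρ W q = ν.withDensity F := by
    simp only [tiltedM, tilted, ← hν]
    congr 1
    funext y
    rw [hexp, hF, hf]
  set μ := ν.withDensity F with hμ
  -- a.e. bounds for the densities
  have hW_le : W ≤ ν := Measure.le_add_right le_rfl
  have hq_le : q ≤ ν := hν ▸ Measure.le_add_left le_rfl
  have hwr_le1 : ∀ᵐ y ∂ν, (W.rnDeriv ν y).toReal ≤ 1 := by
    filter_upwards [Measure.rnDeriv_le_one_of_le hW_le] with y hy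
    simpa using ENNReal.toReal_mono ENNReal.one_ne_top hy
  have hgr_le1 : ∀ᵐ y ∂ν, (q.rnDeriv ν y).toReal ≤ 1 := by
    filter_upwards [Measure.rnDeriv_le_one_of_le hq_le] with y hy
    simpa using ENNReal.toReal_mono ENNReal.one_ne_top hy
  -- integrability of the Rényi integrand
  have hR_nn : ∀ y, 0 ≤ renyiIntegrand ρ W q ν y := fun y =>
    mul_nonneg (Real.rpow_nonneg ENNReal.toReal_nonneg _)
      (Real.rpow_nonneg ENNReal.toReal_nonneg _)
  have hR_int : Integrable (renyiIntegrand ρ W q ν) ν := by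
    refine Integrable.mono' (integrable_const 1) mR.aestronglyMeasurable ?_
    filter_upwards [hwr_le1, hgr_le1] with y h1 h2
    rw [Real.norm_eq_abs, abs_of_nonneg (hR_nn y)]
    exact mul_le_one₀ (Real.rpow_le_one ENNReal.toReal_nonneg h1 hρ0.le)
      (Real.rpow_nonneg ENNReal.toReal_nonneg _)
      (Real.rpow_le_one ENNReal.toReal_nonneg h2 h1ρ.le)
  have hf_int : Integrable f ν := hR_int.const_mul _
  -- `μ` is a probability measure
  have hμuniv : μ Set.univ = 1 := by
    rw [hμ, withDensity_apply _ MeasurableSet.univ, Measure.restrict_univ,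
      ← ofReal_integral_eq_lintegral_ofReal hf_int (ae_of_all _ hf_nn), hf]
    rw [integral_const_mul, ← hZdef, inv_mul_cancel₀ hZ.ne', ENNReal.ofReal_one]
  haveI hμ_prob : IsProbabilityMeasure μ := ⟨hμuniv⟩
  have hμν : μ ≪ ν := withDensity_absolutelyContinuous ν F
  -- `μ ≪ W` and `μ ≪ q`
  have habsW : μ ≪ W := by
    refine Measure.AbsolutelyContinuous.mk fun A hA hWA => ?_
    have hWA' : ∫⁻ y in A, W.rnDeriv ν y ∂ν = 0 := by
      rw [Measure.setLIntegral_rnDeriv hW_le.absolutelyContinuous]; exact hWA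
    have h0 : ∀ᵐ y ∂(ν.restrict A), W.rnDeriv ν y = 0 :=
      (lintegral_eq_zero_iff (Measure.measurable_rnDeriv _ _)).mp hWA'
    rw [hμ, withDensity_apply _ hA]
    refine (lintegral_eq_zero_iff mF).mpr ?_
    filter_upwards [h0] with y hy
    have ht : (W.rnDeriv ν y).toReal = 0 := by rw [hy, ENNReal.toReal_zero]
    show ENNReal.ofReal (f y) = 0
    rw [hf]
    simp [renyiIntegrand, ht, Real.zero_rpow hρ0.ne']
  have habsq : μ ≪ q := by
    refine Measure.AbsolutelyContinuous.mk fun A hA hqA => ?_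
    have hqA' : ∫⁻ y in A, q.rnDeriv ν y ∂ν = 0 := by
      rw [Measure.setLIntegral_rnDeriv hq_le.absolutelyContinuous]; exact hqA
    have h0 : ∀ᵐ y ∂(ν.restrict A), q.rnDeriv ν y = 0 :=
      (lintegral_eq_zero_iff (Measure.measurable_rnDeriv _ _)).mp hqA'
    rw [hμ, withDensity_apply _ hA]
    refine (lintegral_eq_zero_iff mF).mpr ?_
    filter_upwards [h0] with y hy
    have ht : (q.rnDeriv ν y).toReal = 0 := by rw [hy, ENNReal.toReal_zero]
    show ENNReal.ofReal (f y) = 0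
    rw [hf]
    simp [renyiIntegrand, ht, Real.zero_rpow h1ρ.ne']
  -- μ-a.e. the densities of `W` and `q` are nonzero
  have hw_ne0 : ∀ᵐ y ∂μ, W.rnDeriv ν y ≠ 0 := by
    have hS : MeasurableSet {y | W.rnDeriv ν y = 0} :=
      Measure.measurable_rnDeriv _ _ (measurableSet_singleton 0)
    have h0 : μ {y | W.rnDeriv ν y = 0} = 0 := by
      rw [hμ, withDensity_apply _ hS]
      refine (lintegral_eq_zero_iff mF).mpr ?_
      refine (ae_restrict_iff' hS).mpr (ae_of_all _ fun y hy => ?_)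
      have ht : (W.rnDeriv ν y).toReal = 0 := by
        rw [Set.mem_setOf_eq] at hy; rw [hy, ENNReal.toReal_zero]
      show ENNReal.ofReal (f y) = 0
      rw [hf]
      simp [renyiIntegrand, ht, Real.zero_rpow hρ0.ne']
    refine ae_iff.mpr ?_
    simpa only [ne_eq, not_not] using h0
  have hg_ne0 : ∀ᵐ y ∂μ, q.rnDeriv ν y ≠ 0 := by
    have hS : MeasurableSet {y | q.rnDeriv ν y = 0} :=
      Measure.measurable_rnDeriv _ _ (measurableSet_singleton 0)
    have h0 : μ {y | q.rnDeriv ν y = 0} = 0 := by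
      rw [hμ, withDensity_apply _ hS]
      refine (lintegral_eq_zero_iff mF).mpr ?_
      refine (ae_restrict_iff' hS).mpr (ae_of_all _ fun y hy => ?_)
      have ht : (q.rnDeriv ν y).toReal = 0 := by
        rw [Set.mem_setOf_eq] at hy; rw [hy, ENNReal.toReal_zero]
      show ENNReal.ofReal (f y) = 0
      rw [hf]
      simp [renyiIntegrand, ht, Real.zero_rpow h1ρ.ne']
    refine ae_iff.mpr ?_
    simpa only [ne_eq, not_not] using h0
  -- Radon-Nikodym computations
  have hrd : μ.rnDeriv ν =ᵐ[ν] F := Measure.rnDeriv_withDensity ν mF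
  have hchainW : μ.rnDeriv W * W.rnDeriv ν =ᵐ[ν] μ.rnDeriv ν :=
    Measure.rnDeriv_mul_rnDeriv habsW
  have hchainq : μ.rnDeriv q * q.rnDeriv ν =ᵐ[ν] μ.rnDeriv ν :=
    Measure.rnDeriv_mul_rnDeriv habsq
  set h : Y → ℝ := fun y =>
    Real.log ((q.rnDeriv ν y).toReal) - Real.log ((W.rnDeriv ν y).toReal) with hh
  have mh : Measurable h := (Real.measurable_log.comp mg).sub (Real.measurable_log.comp mw)
  -- a.e. identity for `log dμ/dW`
  have hlogW : ∀ᵐ y ∂μ, Real.log ((μ.rnDeriv W y).toReal)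
      = -Real.log Z + (1 - ρ) * h y := by
    filter_upwards [hμν.ae_le hchainW, hμν.ae_le hrd, hw_ne0, hg_ne0,
      hμν.ae_le (Measure.rnDeriv_lt_top W ν), hμν.ae_le (Measure.rnDeriv_lt_top q ν)]
      with y hchain hrd' hw0 hg0 hwt hgt
    simp only [Pi.mul_apply] at hchain
    have hwr_pos : 0 < (W.rnDeriv ν y).toReal := ENNReal.toReal_pos hw0 hwt.ne
    have hgr_pos : 0 < (q.rnDeriv ν y).toReal := ENNReal.toReal_pos hg0 hgt.ne
    have hdiv : μ.rnDeriv W y = F y / W.rnDeriv ν y := by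
      rw [ENNReal.eq_div_iff hw0 hwt.ne, ← hrd', mul_comm]
      exact hchain
    have htr : (μ.rnDeriv W y).toReal = f y / (W.rnDeriv ν y).toReal := by
      rw [hdiv, ENNReal.toReal_div]
      congr 1
      exact ENNReal.toReal_ofReal (hf_nn y)
    have hfy_pos : 0 < f y :=
      mul_pos (inv_pos.mpr hZ)
        (mul_pos (Real.rpow_pos_of_pos hwr_pos _) (Real.rpow_pos_of_pos hgr_pos _))
    rw [htr, Real.log_div hfy_pos.ne' hwr_pos.ne', hf]
    simp only [renyiIntegrand]
    rw [Real.log_mul (inv_ne_zero hZ.ne')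
        (mul_ne_zero (Real.rpow_pos_of_pos hwr_pos _).ne' (Real.rpow_pos_of_pos hgr_pos _).ne'),
      Real.log_inv,
      Real.log_mul (Real.rpow_pos_of_pos hwr_pos _).ne' (Real.rpow_pos_of_pos hgr_pos _).ne',
      Real.log_rpow hwr_pos, Real.log_rpow hgr_pos, hh]
    ring
  -- a.e. identity for `log dμ/dq`
  have hlogq : ∀ᵐ y ∂μ, Real.log ((μ.rnDeriv q y).toReal)
      = -Real.log Z + (-ρ) * h y := by
    filter_upwards [hμν.ae_le hchainq, hμν.ae_le hrd, hw_ne0, hg_ne0,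
      hμν.ae_le (Measure.rnDeriv_lt_top W ν), hμν.ae_le (Measure.rnDeriv_lt_top q ν)]
      with y hchain hrd' hw0 hg0 hwt hgt
    simp only [Pi.mul_apply] at hchain
    have hwr_pos : 0 < (W.rnDeriv ν y).toReal := ENNReal.toReal_pos hw0 hwt.ne
    have hgr_pos : 0 < (q.rnDeriv ν y).toReal := ENNReal.toReal_pos hg0 hgt.ne
    have hdiv : μ.rnDeriv q y = F y / q.rnDeriv ν y := by
      rw [ENNReal.eq_div_iff hg0 hgt.ne, ← hrd', mul_comm]
      exact hchain
    have htr : (μ.rnDeriv q y).toReal = f y / (q.rnDeriv ν y).toReal := by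
      rw [hdiv, ENNReal.toReal_div]
      congr 1
      exact ENNReal.toReal_ofReal (hf_nn y)
    have hfy_pos : 0 < f y :=
      mul_pos (inv_pos.mpr hZ)
        (mul_pos (Real.rpow_pos_of_pos hwr_pos _) (Real.rpow_pos_of_pos hgr_pos _))
    rw [htr, Real.log_div hfy_pos.ne' hgr_pos.ne', hf]
    simp only [renyiIntegrand]
    rw [Real.log_mul (inv_ne_zero hZ.ne')
        (mul_ne_zero (Real.rpow_pos_of_pos hwr_pos _).ne' (Real.rpow_pos_of_pos hgr_pos _).ne'),
      Real.log_inv,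
      Real.log_mul (Real.rpow_pos_of_pos hwr_pos _).ne' (Real.rpow_pos_of_pos hgr_pos _).ne',
      Real.log_rpow hwr_pos, Real.log_rpow hgr_pos, hh]
    ring
  -- integrability of `h` with respect to `μ`
  have hint_h : Integrable h μ := by
    rw [hμ, integrable_withDensity_iff mF (ae_of_all _ fun y => ENNReal.ofReal_lt_top)]
    have heq : (fun y => h y * (F y).toReal) = fun y => h y * f y := by
      funext y
      rw [hF]
      congr 1
      exact ENNReal.toReal_ofReal (hf_nn y)
    rw [heq]
    refine Integrable.mono' (integrable_const (Z⁻¹ * (1 / (1 - ρ) + 1 / ρ)))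
      (mh.mul mf).aestronglyMeasurable ?_
    filter_upwards [hwr_le1, hgr_le1] with y hw1 hg1
    have ha0 : (0:ℝ) ≤ (W.rnDeriv ν y).toReal := ENNReal.toReal_nonneg
    have hb0 : (0:ℝ) ≤ (q.rnDeriv ν y).toReal := ENNReal.toReal_nonneg
    have key1 : ((q.rnDeriv ν y).toReal) ^ (1 - ρ) * |Real.log ((q.rnDeriv ν y).toReal)|
        ≤ 1 / (1 - ρ) := aug_bound hb0 hg1 h1ρ
    have key2 : ((W.rnDeriv ν y).toReal) ^ ρ * |Real.log ((W.rnDeriv ν y).toReal)|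
        ≤ 1 / ρ := aug_bound ha0 hw1 hρ0
    have ha1 : ((W.rnDeriv ν y).toReal) ^ ρ ≤ 1 := Real.rpow_le_one ha0 hw1 hρ0.le
    have hb1 : ((q.rnDeriv ν y).toReal) ^ (1 - ρ) ≤ 1 := Real.rpow_le_one hb0 hg1 h1ρ.le
    have hap : (0:ℝ) ≤ ((W.rnDeriv ν y).toReal) ^ ρ := Real.rpow_nonneg ha0 _
    have hbp : (0:ℝ) ≤ ((q.rnDeriv ν y).toReal) ^ (1 - ρ) := Real.rpow_nonneg hb0 _
    rw [Real.norm_eq_abs, abs_mul, abs_of_nonneg (hf_nn y), hh, hf]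
    simp only [renyiIntegrand]
    have habs : |Real.log ((q.rnDeriv ν y).toReal) - Real.log ((W.rnDeriv ν y).toReal)|
        ≤ |Real.log ((q.rnDeriv ν y).toReal)| + |Real.log ((W.rnDeriv ν y).toReal)| :=
      abs_sub _ _
    have hZi : (0:ℝ) ≤ Z⁻¹ := inv_nonneg.mpr hZ.le
    have t1 : ((W.rnDeriv ν y).toReal) ^ ρ *
        (((q.rnDeriv ν y).toReal) ^ (1 - ρ) * |Real.log ((q.rnDeriv ν y).toReal)|)
        ≤ 1 / (1 - ρ) :=
      le_trans (mul_le_of_le_one_left (by positivity) ha1) key1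
    have t2 : ((q.rnDeriv ν y).toReal) ^ (1 - ρ) *
        (((W.rnDeriv ν y).toReal) ^ ρ * |Real.log ((W.rnDeriv ν y).toReal)|)
        ≤ 1 / ρ :=
      le_trans (mul_le_of_le_one_left (by positivity) hb1) key2
    calc |Real.log ((q.rnDeriv ν y).toReal) - Real.log ((W.rnDeriv ν y).toReal)| *
          (Z⁻¹ * (((W.rnDeriv ν y).toReal) ^ ρ * ((q.rnDeriv ν y).toReal) ^ (1 - ρ)))
        ≤ (|Real.log ((q.rnDeriv ν y).toReal)| + |Real.log ((W.rnDeriv ν y).toReal)|) *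
          (Z⁻¹ * (((W.rnDeriv ν y).toReal) ^ ρ * ((q.rnDeriv ν y).toReal) ^ (1 - ρ)))
          := mul_le_mul_of_nonneg_right habs (by positivity)
      _ = Z⁻¹ * (((W.rnDeriv ν y).toReal) ^ ρ *
            (((q.rnDeriv ν y).toReal) ^ (1 - ρ) * |Real.log ((q.rnDeriv ν y).toReal)|) +
            ((q.rnDeriv ν y).toReal) ^ (1 - ρ) *
            (((W.rnDeriv ν y).toReal) ^ ρ * |Real.log ((W.rnDeriv ν y).toReal)|)) := by ring
      _ ≤ Z⁻¹ * (1 / (1 - ρ) + 1 / ρ) :=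
          mul_le_mul_of_nonneg_left (add_le_add t1 t2) hZi
  -- evaluate the two KL divergences
  have hkW : klDiv' μ W = -Real.log Z + (1 - ρ) * ∫ y, h y ∂μ := by
    simp only [klDiv']
    rw [integral_congr_ae hlogW,
      integral_add (integrable_const _) (hint_h.const_mul _),
      integral_const, integral_const_mul]
    simp
  have hkq : klDiv' μ q = -Real.log Z + (-ρ) * ∫ y, h y ∂μ := by
    simp only [klDiv']
    rw [integral_congr_ae hlogq,
      integral_add (integrable_const _) (hint_h.const_mul _),
      integral_const, integral_const_mul]
    simp
  rw [htilt, hkW, hkq]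
  simp only [renyiDivM, renyiDiv, ← hν, ← hZdef]
  have hne : (1:ℝ) - ρ ≠ 0 := h1ρ.ne'
  have hne2 : ρ - 1 ≠ 0 := by intro hc; apply hne; linarith
  field_simp
  ring

/-- Decomposition of the Augustin information in terms of the tilted channel:
`I_ρ(P;W) = (ρ/(1−ρ)) Σ_x P(x) D_1(W_ρ^{q}(x)‖W(x)) + Σ_x P(x) D_1(W_ρ^{q}(x)‖q)` where
`q = q_{ρ,P}` is the Augustin mean. -/
theorem augustin_information_decomposition {X Y : Type*} [MeasurableSpace Y]
    (W : X → Measure Y) [∀ x, IsProbabilityMeasure (W x)] (ρ : ℝ)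
    (hρ : ρ ∈ Set.Ioo (0 : ℝ) 1)
    (s : Finset X) (P : X → ℝ) (hPpos : ∀ x, 0 ≤ P x) (hPsupp : ∀ x ∉ s, P x = 0)
    (hPsum : ∑ x ∈ s, P x = 1)
    (q : Measure Y) [IsProbabilityMeasure q]
    -- finiteness of `D_ρ(W(x)‖q)` on the support of `P`
    (hfin : ∀ x ∈ s, 0 < ∫ y, renyiIntegrand ρ (W x) q (W x + q) y ∂(W x + q))
    -- `q` is the Augustin mean: it minimizes the conditional Rényi divergence over all
    -- probability measures
    (hmin : ∀ Q' : Measure Y, IsProbabilityMeasure Q' →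
      ∑ x ∈ s, P x * renyiDivM ρ (W x) q ≤ ∑ x ∈ s, P x * renyiDivM ρ (W x) Q') :
    ∑ x ∈ s, P x * renyiDivM ρ (W x) q =
      (ρ / (1 - ρ)) * ∑ x ∈ s, P x * klDiv' (tiltedM ρ (W x) q) (W x) +
        ∑ x ∈ s, P x * klDiv' (tiltedM ρ (W x) q) q := by
  calc ∑ x ∈ s, P x * renyiDivM ρ (W x) q
      = ∑ x ∈ s, ((ρ / (1 - ρ)) * (P x * klDiv' (tiltedM ρ (W x) q) (W x)) +
          P x * klDiv' (tiltedM ρ (W x) q) q) := by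
        refine Finset.sum_congr rfl fun x hx => ?_
        rw [aug_key (W x) q hρ.1 hρ.2 (hfin x hx)]
        ring
    _ = _ := by
        rw [Finset.sum_add_distrib, ← Finset.mul_sum]
end
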